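/- Let (Y, γ) be a standard nonatomic probability space and 𝐁 = (B_n)_{n≥1} measurable subsets with γ(B_n) = 1/2 for all n. Let (ε_n)_{n≥1} be reals with 0 < ε_n < 1 and ∑_{n=1}^∞ ε_n < ∞, and for each n let μ_n be the probability measure on Y with density dμ_n/dγ = 2ε_n·1_{Y∖B_n} + 2(1−ε_n)·1_{B_n}. Then the restricted infinite power γ^𝐁 and the infinite product probability measure ⊗_{n=1}^∞ μ_n on Y^ℕ are equivalent (each is absolutely continuous with respect to the other). -/

import Mathlib

open MeasureTheory Filter Topology Set ENNReal

noncomputable section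

section ActionDefs

variable {G X : Type*}

/-- A Borel action of a group `G` on a measurable space `X`. -/
def IsBorelAction [Group G] [MeasurableSpace G] [MeasurableSpace X]
    (T : G → X → X) : Prop :=
  Measurable (Function.uncurry T) ∧ (∀ x, T 1 x = x) ∧ ∀ g h x, T (g * h) x = T g (T h x)

/-- A measure-preserving Borel action. -/
def IsMPAction [Group G] [MeasurableSpace G] [MeasurableSpace X]
    (μ : Measure X) (T : G → X → X) : Prop :=
  IsBorelAction T ∧ ∀ g, MeasurePreserving (T g) μ μ

/-- A nonsingular Borel action: each `μ ∘ T g` is mutually absolutely continuous with `μ`. -/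
def IsNonsingularAction [Group G] [MeasurableSpace G] [MeasurableSpace X]
    (μ : Measure X) (T : G → X → X) : Prop :=
  IsBorelAction T ∧ ∀ g, μ.map (T g) ≪ μ ∧ μ ≪ μ.map (T g)

/-- An action is of 0-type if `μ (T g A ∩ B) → 0` as `g → ∞` along the cocompact filter,
for all sets `A`, `B` of finite measure. -/
def IsZeroType [Group G] [MeasurableSpace G] [TopologicalSpace G] [MeasurableSpace X]
    (μ : Measure X) (T : G → X → X) : Prop :=
  ∀ A B : Set X, MeasurableSet A → MeasurableSet B → μ A ≠ ∞ → μ B ≠ ∞ →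
    Tendsto (fun g : G => μ (T g '' A ∩ B)) (cocompact G) (𝓝 0)

/-- A probability-preserving action is mixing if `μ (T g A ∩ B) → μ A * μ B` as `g → ∞`. -/
def IsMixingAction [Group G] [MeasurableSpace G] [TopologicalSpace G] [MeasurableSpace X]
    (μ : Measure X) (T : G → X → X) : Prop :=
  ∀ A B : Set X, MeasurableSet A → MeasurableSet B →
    Tendsto (fun g : G => μ (T g '' A ∩ B)) (cocompact G) (𝓝 (μ A * μ B))

/-- A free action: a.e. point has trivial stabilizer. -/
def IsFreeAction [Group G] [MeasurableSpace X] (μ : Measure X) (T : G → X → X) : Prop :=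
  ∀ᵐ x ∂μ, ∀ g : G, T g x = x → g = 1

/-- A `T`-Følner sequence of sets of finite positive measure. -/
def IsFolner [Group G] [TopologicalSpace G] [MeasurableSpace X]
    (μ : Measure X) (T : G → X → X) (A : ℕ → Set X) : Prop :=
  (∀ n, MeasurableSet (A n) ∧ 0 < μ (A n) ∧ μ (A n) ≠ ∞) ∧
    ∀ K : Set G, IsCompact K →
      Tendsto (fun n => ⨆ g ∈ K, μ (symmDiff (T g '' A n) (A n)) / μ (A n)) atTop (𝓝 0)

/-- The restriction of the action to an invariant set `A` is totally dissipative: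
there is a measurable subset `W ⊆ A` meeting the orbit of a.e. point of `A` exactly once,
and a.e. point of `A` has compact stabilizer. -/
def IsTotallyDissipativeOn [Group G] [TopologicalSpace G] [MeasurableSpace X]
    (μ : Measure X) (T : G → X → X) (A : Set X) : Prop :=
  ∃ W : Set X, MeasurableSet W ∧ W ⊆ A ∧
    ∀ᵐ z ∂(μ.restrict A),
      (∃! w, w ∈ W ∧ ∃ g : G, T g z = w) ∧ IsCompact {g : G | T g z = z}

/-- A totally dissipative action. -/
def IsTotallyDissipative [Group G] [TopologicalSpace G] [MeasurableSpace X]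
    (μ : Measure X) (T : G → X → X) : Prop :=
  IsTotallyDissipativeOn μ T Set.univ

/-- The restriction of the action to the invariant set `A` is conservative: no invariant
subset of `A` of positive measure on which the action is totally dissipative. -/
def IsConservativeOn [Group G] [TopologicalSpace G] [MeasurableSpace X]
    (μ : Measure X) (T : G → X → X) (A : Set X) : Prop :=
  ¬ ∃ B : Set X, B ⊆ A ∧ MeasurableSet B ∧ 0 < μ B ∧ (∀ g : G, T g ⁻¹' B = B) ∧
      IsTotallyDissipativeOn μ T B

/-- A conservative action. -/
def IsConservativeAction [Group G] [TopologicalSpace G] [MeasurableSpace X]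
    (μ : Measure X) (T : G → X → X) : Prop :=
  IsConservativeOn μ T Set.univ

/-- An ergodic action: every a.e. invariant set is null or conull. -/
def IsErgodicAction [Group G] [MeasurableSpace X] (μ : Measure X) (T : G → X → X) : Prop :=
  ∀ A : Set X, MeasurableSet A → (∀ g : G, μ (symmDiff (T g '' A) A) = 0) →
    μ A = 0 ∨ μ Aᶜ = 0

/-- A properly ergodic action: ergodic, and the measure is not concentrated on one orbit. -/
def IsProperlyErgodic [Group G] [MeasurableSpace X] (μ : Measure X) (T : G → X → X) : Prop :=
  IsErgodicAction μ T ∧ ¬ ∃ z : X, μ {y | ∃ g : G, T g z = y}ᶜ = 0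

/-- A weakly mixing action: the product with every ergodic probability-preserving action
on a standard probability space is ergodic. -/
def IsWeaklyMixingAction [Group G] [MeasurableSpace G] [MeasurableSpace X]
    (μ : Measure X) (T : G → X → X) : Prop :=
  ∀ (Z : Type) [MeasurableSpace Z] [StandardBorelSpace Z] (κ : Measure Z)
    [IsProbabilityMeasure κ] (R : G → Z → Z),
    IsMPAction κ R → IsErgodicAction κ R →
      IsErgodicAction (μ.prod κ) (fun g p => (T g p.1, R g p.2))

/-- A sharply weak mixing action: properly ergodic, and the product with every ergodic
conservative nonsingular action on a nonatomic standard probability space is either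
ergodic or totally dissipative. -/
def IsSharplyWeakMixing [Group G] [MeasurableSpace G] [TopologicalSpace G] [MeasurableSpace X]
    (μ : Measure X) (T : G → X → X) : Prop :=
  IsProperlyErgodic μ T ∧
    ∀ (Z : Type) [MeasurableSpace Z] [StandardBorelSpace Z] (κ : Measure Z)
      [IsProbabilityMeasure κ] (R : G → Z → Z),
      (∀ z : Z, κ {z} = 0) →
      IsNonsingularAction κ R → IsErgodicAction κ R → IsConservativeAction κ R →
        (IsErgodicAction (μ.prod κ) (fun g p => (T g p.1, R g p.2)) ∨
          IsTotallyDissipative (μ.prod κ) (fun g p => (T g p.1, R g p.2)))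

end ActionDefs

/-- A witness for the Haagerup property: a weakly continuous unitary representation of `G`
on a separable complex Hilbert space whose matrix coefficients vanish at infinity and which
has almost-invariant unit vectors. -/
structure HaagerupWitness (G : Type*) [Group G] [TopologicalSpace G] where
  (E : Type)
  [nacg : NormedAddCommGroup E]
  [ips : InnerProductSpace ℂ E]
  [cs : CompleteSpace E]
  [sct : SecondCountableTopology E]
  (V : G →* (E ≃ₗᵢ[ℂ] E))
  (weak_cont : ∀ ξ η : E, Continuous fun g : G => (inner ℂ (V g ξ) η : ℂ))
  (c0 : ∀ ξ η : E, Tendsto (fun g : G => (inner ℂ (V g ξ) η : ℂ)) (cocompact G) (𝓝 0))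
  (almost_inv : ∀ ε : ℝ, 0 < ε → ∀ K : Set G, IsCompact K →
    ∃ ξ : E, ‖ξ‖ = 1 ∧ ∀ g ∈ K, ‖V g ξ - ξ‖ < ε)

/-- The Haagerup property for a topological group `G`. -/
def HasHaagerupProperty (G : Type*) [Group G] [TopologicalSpace G] : Prop :=
  Nonempty (HaagerupWitness G)

/-- Property (T) for the pair `H ⊆ G`: every weakly continuous unitary representation of `G`
on a separable complex Hilbert space with almost-invariant unit vectors has a nonzero
`H`-invariant vector. -/
def HasPropertyTPair (G : Type*) [Group G] [TopologicalSpace G] (H : Subgroup G) : Prop :=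
  ∀ (E : Type) [NormedAddCommGroup E] [InnerProductSpace ℂ E] [CompleteSpace E]
    [SecondCountableTopology E] (V : G →* (E ≃ₗᵢ[ℂ] E)),
    (∀ ξ η : E, Continuous fun g : G => (inner ℂ (V g ξ) η : ℂ)) →
    (∀ ε : ℝ, 0 < ε → ∀ K : Set G, IsCompact K →
      ∃ ξ : E, ‖ξ‖ = 1 ∧ ∀ g ∈ K, ‖V g ξ - ξ‖ < ε) →
    ∃ η : E, η ≠ 0 ∧ ∀ h ∈ H, V h η = η

/-- The squared Hellinger distance of two measures `α`, `β` with respect to a reference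
measure `γ`. -/
def hellingerSq {Y : Type*} [MeasurableSpace Y] (γ α β : Measure Y) : ℝ :=
  (1 / 2) * ∫ y, (Real.sqrt (α.rnDeriv γ y).toReal - Real.sqrt (β.rnDeriv γ y).toReal) ^ 2 ∂γ

/-- The tail cylinder `𝐁ⁿ = Yⁿ × B n × B (n+1) × ⋯` (with `0`-based indexing): the set of
sequences whose `j`-th coordinate lies in `B j` for every `j ≥ n`. -/
def tailCylinder {Y : Type*} (B : ℕ → Set Y) (n : ℕ) : Set (ℕ → Y) :=
  {x : ℕ → Y | ∀ j, n ≤ j → x j ∈ B j}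

/-!
Sort sequences by the finite set `S` of coordinates at which they leave `B`. Almost every
sequence has such a finite `S`: for `γ^𝐁` because it lives on the tail cylinders, for `⊗ μₙ` by
Borel–Cantelli, since `μₙ (Bₙᶜ) = εₙ` is summable. Let `Eⱼ = Bⱼᶜ` for `j ∈ S` and `Eⱼ = Bⱼ`
otherwise. On the box `∏ⱼ Eⱼ`, `γ^𝐁` is the product of the measures `2γ|Eⱼ`, while `μⱼ` has
constant density on `Eⱼ`, so `μⱼ|Eⱼ = μⱼ (Eⱼ) • 2γ|Eⱼ`. Hence the restrictions of the two
measures to the box are proportional, with constant `(⊗ μₙ)(∏ⱼ Eⱼ)`. That constant is nonzero: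
a.e. sequence lies eventually in `E`, so some tail box `∏_{j ≥ N} Eⱼ` has positive measure, and
the remaining factors `μⱼ (Eⱼ)` are positive.
-/

open Measure

section InfinitePi

variable {X : ℕ → Type*} [∀ i, MeasurableSpace (X i)]

theorem tendsto_measure_pi_of_monotone {ι : Type*} [Countable ι] {Z : ι → Type*}
    [∀ i, MeasurableSpace (Z i)] (μ : Measure (∀ i, Z i)) [IsFiniteMeasure μ]
    {C : ∀ i, Set (Z i)} (hC : ∀ i, MeasurableSet (C i)) {I : ℕ → Set ι}
    (hI : Monotone I) :
    Tendsto (fun N => μ ((I N).pi C)) atTop (𝓝 (μ ((⋃ N, I N).pi C))) := by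
  rw [pi_iUnion_eq_iInter_pi]
  exact tendsto_measure_iInter_atTop
    (fun N => (MeasurableSet.pi (to_countable _) fun i _ => hC i).nullMeasurableSet)
    (fun _ _ h => pi_mono' (fun _ _ => subset_rfl) (hI h)) ⟨0, measure_ne_top _ _⟩

variable (ν : ∀ i, Measure (X i)) [∀ i, IsProbabilityMeasure (ν i)]

theorem eq_infinitePi_of_forall_cylinder {π : Measure (∀ i, X i)}
    (h : ∀ (m : ℕ) (C : ∀ i, Set (X i)), (∀ j, MeasurableSet (C j)) →
      (∀ j, m ≤ j → C j = univ) →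
      π {x | ∀ j, x j ∈ C j} = ∏ j ∈ Finset.range m, ν j (C j)) :
    π = infinitePi ν := by
  classical
  refine eq_infinitePi ν fun s t ht => ?_
  obtain ⟨m, hm⟩ := s.exists_nat_subset_range
  have hbox : (↑s : Set ℕ).pi t = {x | ∀ j, x j ∈ s.piecewise t (fun _ => univ) j} := by
    ext x
    simp only [Set.mem_pi, Finset.mem_coe, mem_ofPred_eq]
    refine forall_congr' fun j => ?_
    by_cases hj : j ∈ s <;> simp [hj]
  have hmeas : ∀ j, MeasurableSet (s.piecewise t (fun _ => univ) j) := fun j => by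
    by_cases hj : j ∈ s <;> simp [hj, ht j]
  have htail : ∀ j, m ≤ j → s.piecewise t (fun _ => univ) j = univ := fun j hj =>
    Finset.piecewise_eq_of_notMem _ _ _ fun hjs => by
      simpa using (Finset.mem_range.1 (hm hjs)).trans_le hj
  rw [hbox, h m _ hmeas htail, ← Finset.prod_subset hm fun j _ hj => by
    rw [Finset.piecewise_eq_of_notMem _ _ _ hj, measure_univ]]
  exact Finset.prod_congr rfl fun j hj => by rw [Finset.piecewise_eq_of_mem _ _ _ hj]

theorem infinitePi_univ_pi_eq_prod_mul {C : ∀ i, Set (X i)} (hC : ∀ i, MeasurableSet (C i))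
    (s : Finset ℕ) :
    infinitePi ν (univ.pi C)
      = (∏ i ∈ s, ν i (C i)) * infinitePi ν ((↑s : Set ℕ)ᶜ.pi C) := by
  classical
  obtain ⟨M, hM⟩ := s.exists_nat_subset_range
  have hmono : Monotone fun N => (↑(Finset.range N) : Set ℕ) := fun _ _ h => by simpa using h
  have hunion : (⋃ N, (↑(Finset.range N) : Set ℕ)) = univ :=
    eq_univ_of_forall fun i => mem_iUnion.2 ⟨i + 1, by simp⟩
  have hhead := tendsto_measure_pi_of_monotone (infinitePi ν) hC hmono
  have htail := tendsto_measure_pi_of_monotone (infinitePi ν) hC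
    (I := fun N => (↑(Finset.range N) : Set ℕ) \ ↑s)
    fun _ _ h => sdiff_subset_sdiff_left (hmono h)
  rw [hunion] at hhead
  rw [← iUnion_sdiff, hunion, ← compl_eq_univ_sdiff] at htail
  refine tendsto_nhds_unique hhead ((ENNReal.Tendsto.const_mul htail (Or.inr ?_)).congr' ?_)
  · exact (ENNReal.prod_lt_top fun i _ => measure_lt_top _ _).ne
  filter_upwards [eventually_ge_atTop M] with N hN
  rw [← Finset.coe_sdiff, infinitePi_pi _ fun i _ => hC i, infinitePi_pi _ fun i _ => hC i,
    mul_comm, Finset.prod_sdiff (hM.trans (Finset.range_mono hN))]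

theorem infinitePi_univ_pi_ne_zero {E : ∀ i, Set (X i)} (hE : ∀ i, MeasurableSet (E i))
    (hνE : ∀ i, ν i (E i) ≠ 0) (hfin : ∀ᵐ x ∂infinitePi ν, {i | x i ∉ E i}.Finite) :
    infinitePi ν (univ.pi E) ≠ 0 := by
  have hcover :
      ∀ᵐ x ∂infinitePi ν, x ∈ ⋃ N, (↑(Finset.range N) : Set ℕ)ᶜ.pi E := by
    filter_upwards [hfin] with x hx
    obtain ⟨N, hN⟩ := hx.bddAbove
    refine mem_iUnion.2 ⟨N + 1, fun i hi => not_not.1 fun h => ?_⟩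
    simp only [mem_compl_iff, Finset.coe_range, mem_Iio, not_lt] at hi
    exact absurd (hN h) (by omega)
  obtain ⟨N, hN⟩ : ∃ N, infinitePi ν ((↑(Finset.range N) : Set ℕ)ᶜ.pi E) ≠ 0 := by
    by_contra! h
    obtain ⟨x, hx, hx'⟩ :=
      (hcover.and (measure_eq_zero_iff_ae_notMem.1 (measure_iUnion_null h))).exists
    exact hx' hx
  rw [infinitePi_univ_pi_eq_prod_mul ν hE (Finset.range N)]
  exact mul_ne_zero (Finset.prod_ne_zero_iff.2 fun i _ => hνE i) hN

theorem infinitePi_restrict_univ_pi {E : ∀ i, Set (X i)} (hE : ∀ i, MeasurableSet (E i))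
    (ρ : ∀ i, Measure (X i))
    (hνρ : ∀ i D, MeasurableSet D → D ⊆ E i → ν i D = ν i (E i) * ρ i D)
    (μ : Measure (∀ i, X i))
    (hμ : ∀ (s : Finset ℕ) (D : ∀ i, Set (X i)), (∀ i, MeasurableSet (D i)) →
      (∀ i, D i ⊆ E i) → (∀ i ∉ s, D i = E i) →
      μ (univ.pi D) = ∏ i ∈ s, ρ i (D i)) :
    (infinitePi ν).restrict (univ.pi E)
      = infinitePi ν (univ.pi E) • μ.restrict (univ.pi E) := by
  classical
  have hbox : ∀ (s : Finset ℕ) (t : ∀ i, Set (X i)), (∀ i, MeasurableSet (t i)) →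
      infinitePi ν ((↑s : Set ℕ).pi t ∩ univ.pi E)
        = infinitePi ν (univ.pi E) * μ ((↑s : Set ℕ).pi t ∩ univ.pi E) := by
    intro s t ht
    set D : ∀ i, Set (X i) := fun i => if i ∈ s then t i ∩ E i else E i
    have hDm : ∀ i, MeasurableSet (D i) := fun i => by
      by_cases hi : i ∈ s <;> simp [D, hi, (ht i).inter (hE i), hE i]
    have hDE : ∀ i, D i ⊆ E i := fun i => by
      by_cases hi : i ∈ s <;> simp [D, hi]
    have hDs : ∀ i ∉ s, D i = E i := fun i hi => if_neg hi
    have hD : (↑s : Set ℕ).pi t ∩ univ.pi E = univ.pi D := by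
      ext x
      simp only [mem_inter_iff, Set.mem_pi, mem_univ, D]
      grind
    have htail : (↑s : Set ℕ)ᶜ.pi D = (↑s : Set ℕ)ᶜ.pi E :=
      pi_congr rfl fun i hi => hDs i hi
    rw [hD, infinitePi_univ_pi_eq_prod_mul ν hDm s, infinitePi_univ_pi_eq_prod_mul ν hE s,
      htail, hμ s D hDm hDE hDs,
      Finset.prod_congr rfl fun i _ => hνρ i (D i) (hDm i) (hDE i), Finset.prod_mul_distrib]
    ring
  refine ext_of_generate_finite _ generateFrom_squareCylinders.symm
    (isPiSystem_squareCylinders (fun _ => MeasurableSpace.isPiSystem_measurableSet)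
      fun _ => .univ) ?_ ?_
  · rintro _ ⟨s, t, ht, rfl⟩
    have hm : MeasurableSet ((↑s : Set ℕ).pi t) :=
      .pi (Finset.countable_toSet s) fun i _ => ht i (mem_univ i)
    rw [restrict_apply hm, Measure.smul_apply, restrict_apply hm, smul_eq_mul]
    exact hbox s t fun i => ht i (mem_univ i)
  · simpa using hbox ∅ (fun _ => univ) fun _ => .univ

theorem infinitePi_ae_finite_setOf_notMem {E : ∀ i, Set (X i)} (hE : ∀ i, MeasurableSet (E i))
    (hsum : ∑' i, ν i (E i)ᶜ ≠ ∞) :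
    ∀ᵐ x ∂infinitePi ν, {i | x i ∉ E i}.Finite := by
  have hmarg : ∀ i, infinitePi ν {x | x i ∉ E i} = ν i (E i)ᶜ := fun i =>
    (measurePreserving_eval_infinitePi ν i).measure_preimage (hE i).compl.nullMeasurableSet
  exact ae_finite_setOfPred_mem (s := fun i => {x : ∀ i, X i | x i ∉ E i}) (by simpa [hmarg])

end InfinitePi

theorem absolutelyContinuous_of_ae_mem_iUnion {α ι : Type*} [MeasurableSpace α] [Countable ι]
    {μ ν : Measure α} {P : ι → Set α} (hcover : ∀ᵐ x ∂μ, ∃ i, x ∈ P i)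
    (h : ∀ i, μ.restrict (P i) ≪ ν) : μ ≪ ν := by
  refine AbsolutelyContinuous.mk fun s hs hνs => measure_eq_zero_iff_ae_notMem.2 ?_
  have hpiece : ∀ i, ∀ᵐ x ∂μ, x ∉ s ∩ P i := fun i => by
    rw [← measure_eq_zero_iff_ae_notMem, ← restrict_apply hs]
    exact h i hνs
  filter_upwards [hcover, ae_all_iff.2 hpiece] with x ⟨i, hi⟩ hx hxs
  exact hx i ⟨hxs, hi⟩

theorem mutuallyAbsolutelyContinuous_of_restrict_eq_smul {α ι : Type*} [MeasurableSpace α]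
    [Countable ι] {μ ν : Measure α} {P : ι → Set α} (hμ : ∀ᵐ x ∂μ, ∃ i, x ∈ P i)
    (hν : ∀ᵐ x ∂ν, ∃ i, x ∈ P i) (c : ι → ℝ≥0∞) (hc : ∀ i, c i ≠ 0)
    (h : ∀ i, μ.restrict (P i) = c i • ν.restrict (P i)) : μ ≪ ν ∧ ν ≪ μ := by
  refine ⟨absolutelyContinuous_of_ae_mem_iUnion hμ fun i => ?_,
    absolutelyContinuous_of_ae_mem_iUnion hν fun i => ?_⟩
  · rw [h i]
    exact smul_absolutelyContinuous.trans (absolutelyContinuous_of_le restrict_le_self)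
  · refine (absolutelyContinuous_smul (hc i)).trans ?_
    rw [← h i]
    exact absolutelyContinuous_of_le restrict_le_self

section Biased

variable {Y : Type*} [MeasurableSpace Y] {γ : Measure Y}

theorem withDensity_apply_of_subset_of_eqOn {f : Y → ℝ≥0∞} {c : ℝ≥0∞} {D E : Set Y}
    (hD : MeasurableSet D) (hDE : D ⊆ E) (hf : EqOn f (fun _ => c) E) :
    γ.withDensity f D = c * γ D := by
  rw [withDensity_apply _ hD, setLIntegral_congr_fun hD (hf.mono hDE), setLIntegral_const]

def biasedMeasure (γ : Measure Y) (B : Set Y) (ε : ℝ) : Measure Y :=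
  γ.withDensity fun y => B.indicator (fun _ => ENNReal.ofReal (2 * (1 - ε))) y +
    Bᶜ.indicator (fun _ => ENNReal.ofReal (2 * ε)) y

variable {B D : Set Y} {ε : ℝ}

theorem biasedMeasure_apply_of_subset (hD : MeasurableSet D) (hDB : D ⊆ B) :
    biasedMeasure γ B ε D = ENNReal.ofReal (2 * (1 - ε)) * γ D :=
  withDensity_apply_of_subset_of_eqOn hD hDB fun y hy => by simp [hy]

theorem biasedMeasure_apply_of_subset_compl (hD : MeasurableSet D) (hDB : D ⊆ Bᶜ) :
    biasedMeasure γ B ε D = ENNReal.ofReal (2 * ε) * γ D :=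
  withDensity_apply_of_subset_of_eqOn hD hDB fun y hy => by simp [(mem_compl_iff _ _).1 hy]

theorem ofReal_two_mul_mul_half (a : ℝ) :
    ENNReal.ofReal (2 * a) * (1 / 2) = ENNReal.ofReal a := by
  rw [ENNReal.ofReal_mul zero_le_two, ENNReal.ofReal_ofNat, mul_comm, ← mul_assoc, one_div,
    ENNReal.inv_mul_cancel two_ne_zero ofNat_ne_top, one_mul]

theorem biasedMeasure_self (hB : MeasurableSet B) (hγB : γ B = 1 / 2) :
    biasedMeasure γ B ε B = ENNReal.ofReal (1 - ε) := by
  rw [biasedMeasure_apply_of_subset hB subset_rfl, hγB, ofReal_two_mul_mul_half]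

variable [IsProbabilityMeasure γ]

theorem measure_compl_eq_half (hB : MeasurableSet B) (hγB : γ B = 1 / 2) : γ Bᶜ = 1 / 2 := by
  rw [prob_compl_eq_one_sub hB, hγB, one_div, ENNReal.one_sub_inv_two]

theorem biasedMeasure_compl (hB : MeasurableSet B) (hγB : γ B = 1 / 2) :
    biasedMeasure γ B ε Bᶜ = ENNReal.ofReal ε := by
  rw [biasedMeasure_apply_of_subset_compl hB.compl subset_rfl, measure_compl_eq_half hB hγB,
    ofReal_two_mul_mul_half]

theorem isProbabilityMeasure_biasedMeasure (hB : MeasurableSet B) (hγB : γ B = 1 / 2)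
    (hε₀ : 0 ≤ ε) (hε₁ : ε ≤ 1) : IsProbabilityMeasure (biasedMeasure γ B ε) := by
  constructor
  rw [← union_compl_self B, measure_union disjoint_compl_right hB.compl,
    biasedMeasure_self hB hγB, biasedMeasure_compl hB hγB,
    ← ENNReal.ofReal_add (by linarith) hε₀, sub_add_cancel, ENNReal.ofReal_one]

end Biased

section FlipOn

variable {Y : Type*} {B : ℕ → Set Y}

def flipOn (B : ℕ → Set Y) (S : Finset ℕ) : ℕ → Set Y :=
  S.piecewise (fun j => (B j)ᶜ) B

theorem setOf_notMem_flipOn_subset (S : Finset ℕ) (x : ℕ → Y) :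
    {j | x j ∉ flipOn B S j} ⊆ {j | x j ∉ B j} ∪ ↑S := by
  intro j hj
  by_cases hjS : j ∈ S <;> simp_all [flipOn]

variable [MeasurableSpace Y]

theorem ae_exists_mem_univ_pi_flipOn {μ : Measure (ℕ → Y)}
    (hfin : ∀ᵐ x ∂μ, {j | x j ∉ B j}.Finite) :
    ∀ᵐ x ∂μ, ∃ S, x ∈ univ.pi (flipOn B S) := by
  filter_upwards [hfin] with x hx
  refine ⟨hx.toFinset, fun j _ => ?_⟩
  by_cases hj : x j ∈ B j <;> simp [flipOn, hj]

theorem ae_finite_setOf_notMem_of_measure_tailCylinder {μ : Measure (ℕ → Y)}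
    (h : μ ((⋃ n, tailCylinder B n)ᶜ) = 0) : ∀ᵐ x ∂μ, {j | x j ∉ B j}.Finite := by
  filter_upwards [measure_eq_zero_iff_ae_notMem.1 h] with x hx
  obtain ⟨n, hn⟩ := mem_iUnion.1 (not_not.1 hx)
  exact (finite_Iio n).subset fun j hj => not_le.1 fun h => hj (hn j h)

theorem measurableSet_flipOn (hBm : ∀ j, MeasurableSet (B j)) (S : Finset ℕ) (j : ℕ) :
    MeasurableSet (flipOn B S j) := by
  by_cases hj : j ∈ S <;> simp [flipOn, hj, hBm j]

variable {γ : Measure Y} [IsProbabilityMeasure γ]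

theorem measure_flipOn (hBm : ∀ j, MeasurableSet (B j)) (hB : ∀ j, γ (B j) = 1 / 2)
    (S : Finset ℕ) (j : ℕ) : γ (flipOn B S j) = 1 / 2 := by
  by_cases hj : j ∈ S
  · rw [flipOn, Finset.piecewise_eq_of_mem _ _ _ hj, measure_compl_eq_half (hBm j) (hB j)]
  · rw [flipOn, Finset.piecewise_eq_of_notMem _ _ _ hj, hB j]

theorem biasedMeasure_flipOn_ne_zero (hBm : ∀ j, MeasurableSet (B j))
    (hB : ∀ j, γ (B j) = 1 / 2) (S : Finset ℕ) {ε : ℕ → ℝ} (hε : ∀ n, 0 < ε n ∧ ε n < 1)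
    (j : ℕ) :
    biasedMeasure γ (B j) (ε j) (flipOn B S j) ≠ 0 := by
  by_cases hj : j ∈ S
  · simpa [flipOn, hj, biasedMeasure_compl (hBm j) (hB j)] using (hε j).1
  · simpa [flipOn, hj, biasedMeasure_self (hBm j) (hB j)] using (hε j).2

theorem biasedMeasure_apply_of_subset_flipOn (hBm : ∀ j, MeasurableSet (B j))
    (hB : ∀ j, γ (B j) = 1 / 2) (S : Finset ℕ) (ε : ℝ) {j : ℕ} {D : Set Y}
    (hD : MeasurableSet D) (hDE : D ⊆ flipOn B S j) :
    biasedMeasure γ (B j) ε D = biasedMeasure γ (B j) ε (flipOn B S j) * (2 * γ D) := by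
  obtain ⟨c, hc⟩ : ∃ c, ∀ D' ⊆ flipOn B S j, MeasurableSet D' →
      biasedMeasure γ (B j) ε D' = c * γ D' := by
    by_cases hj : j ∈ S
    · exact ⟨_, fun D' hD' hm => biasedMeasure_apply_of_subset_compl hm
        (by simpa [flipOn, hj] using hD')⟩
    · exact ⟨_, fun D' hD' hm => biasedMeasure_apply_of_subset hm
        (by simpa [flipOn, hj] using hD')⟩
  rw [hc D hDE hD, hc _ subset_rfl (measurableSet_flipOn hBm S j), measure_flipOn hBm hB S,
    mul_assoc, ← mul_assoc (1 / 2), one_div, ENNReal.inv_mul_cancel two_ne_zero ofNat_ne_top,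
    one_mul]

theorem restrictedPower_univ_pi_eq_prod (hBm : ∀ j, MeasurableSet (B j))
    (hB : ∀ j, γ (B j) = 1 / 2) (S : Finset ℕ) {μB : Measure (ℕ → Y)}
    (hcylB : ∀ (m : ℕ) (C : ℕ → Set Y), (∀ j, MeasurableSet (C j)) →
      (∀ j, m ≤ j → C j = B j) →
      μB {x : ℕ → Y | ∀ j, x j ∈ C j} = ∏ j ∈ Finset.range m, γ (C j) / γ (B j))
    (s : Finset ℕ) {D : ℕ → Set Y} (hD : ∀ j, MeasurableSet (D j))
    (hDs : ∀ j ∉ s, D j = flipOn B S j) :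
    μB (univ.pi D) = ∏ j ∈ s, 2 * γ (D j) := by
  obtain ⟨M, hM⟩ := (s ∪ S).exists_nat_subset_range
  have hpi : univ.pi D = {x | ∀ j, x j ∈ D j} := by ext; simp
  rw [hpi, hcylB M D hD fun j hj => ?tail, Finset.prod_subset (Finset.subset_union_left.trans hM)
    fun j _ hj => ?outside]
  · exact Finset.prod_congr rfl fun j _ => by
      rw [hB j, div_eq_mul_inv, one_div, inv_inv, mul_comm]
  case tail =>
    have hjM : j ∉ s ∪ S := fun hjs => by simpa using (Finset.mem_range.1 (hM hjs)).trans_le hj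
    rw [Finset.mem_union, not_or] at hjM
    rw [hDs j hjM.1, flipOn, Finset.piecewise_eq_of_notMem _ _ _ hjM.2]
  case outside =>
    rw [hDs j hj, measure_flipOn hBm hB S, one_div,
      ENNReal.mul_inv_cancel two_ne_zero ofNat_ne_top]

end FlipOn

theorem restrictedPower_equiv_infiniteProduct_general {Y : Type*} [MeasurableSpace Y]
    (γ : Measure Y) [IsProbabilityMeasure γ]
    (B : ℕ → Set Y) (hBm : ∀ n, MeasurableSet (B n)) (hB : ∀ n, γ (B n) = 1 / 2)
    (ε : ℕ → ℝ) (hε : ∀ n, 0 < ε n ∧ ε n < 1) (hsum : Summable ε)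
    (μB : Measure (ℕ → Y))
    (hcylB : ∀ (m : ℕ) (C : ℕ → Set Y), (∀ j, MeasurableSet (C j)) →
      (∀ j, m ≤ j → C j = B j) →
      μB {x : ℕ → Y | ∀ j, x j ∈ C j} = ∏ j ∈ Finset.range m, γ (C j) / γ (B j))
    (hsuppB : μB ((⋃ n, tailCylinder B n)ᶜ) = 0)
    (π : Measure (ℕ → Y))
    (hcylπ : ∀ (m : ℕ) (C : ℕ → Set Y), (∀ j, MeasurableSet (C j)) →
      (∀ j, m ≤ j → C j = Set.univ) →
      π {x : ℕ → Y | ∀ j, x j ∈ C j} = ∏ j ∈ Finset.range m,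
        (γ.withDensity fun y =>
          (B j).indicator (fun _ => ENNReal.ofReal (2 * (1 - ε j))) y +
            ((B j)ᶜ).indicator (fun _ => ENNReal.ofReal (2 * ε j)) y) (C j)) :
    μB ≪ π ∧ π ≪ μB := by
  set ν : ℕ → Measure Y := fun j => biasedMeasure γ (B j) (ε j)
  have : ∀ j, IsProbabilityMeasure (ν j) := fun j =>
    isProbabilityMeasure_biasedMeasure (hBm j) (hB j) (hε j).1.le (hε j).2.le
  obtain rfl : π = infinitePi ν := eq_infinitePi_of_forall_cylinder ν hcylπ
  have hfinπ : ∀ᵐ x ∂infinitePi ν, {j | x j ∉ B j}.Finite := by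
    refine infinitePi_ae_finite_setOf_notMem ν hBm ?_
    rw [tsum_congr fun j => biasedMeasure_compl (hBm j) (hB j),
      ← ENNReal.ofReal_tsum_of_nonneg (fun j => (hε j).1.le) hsum]
    exact ofReal_ne_top
  have hfinμB := ae_finite_setOf_notMem_of_measure_tailCylinder hsuppB
  refine (mutuallyAbsolutelyContinuous_of_restrict_eq_smul (ae_exists_mem_univ_pi_flipOn hfinπ)
    (ae_exists_mem_univ_pi_flipOn hfinμB) (fun S => infinitePi ν (univ.pi (flipOn B S)))
    (fun S => ?_) fun S => ?_).symm
  · refine infinitePi_univ_pi_ne_zero ν (measurableSet_flipOn hBm S)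
      (biasedMeasure_flipOn_ne_zero hBm hB S hε) ?_
    filter_upwards [hfinπ] with x hx
    exact (hx.union S.finite_toSet).subset (setOf_notMem_flipOn_subset S x)
  · refine infinitePi_restrict_univ_pi ν (measurableSet_flipOn hBm S)
      (fun _ => (2 : ℝ≥0∞) • γ) (fun j D hD hDE => ?_) μB fun s D hD _ hDs => ?_
    · simpa using biasedMeasure_apply_of_subset_flipOn hBm hB S (ε j) hD hDE
    · simpa using restrictedPower_univ_pi_eq_prod hBm hB S hcylB s hD hDs

/-- **From the proof of Theorem B (via Hill's theorems).** The restricted infinite power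
`γ^𝐁` is equivalent to the infinite product `⊗ₙ μₙ` of the probability measures `μₙ` with
densities `dμₙ/dγ = 2 εₙ 1_{Y∖Bₙ} + 2 (1 − εₙ) 1_{Bₙ}`, provided `∑ εₙ < ∞`. -/
theorem restrictedPower_equiv_infiniteProduct {Y : Type*} [MeasurableSpace Y]
    [StandardBorelSpace Y]
    (γ : Measure Y) [IsProbabilityMeasure γ] (hna : ∀ y : Y, γ {y} = 0)
    (B : ℕ → Set Y) (hBm : ∀ n, MeasurableSet (B n)) (hB : ∀ n, γ (B n) = 1 / 2)
    (ε : ℕ → ℝ) (hε : ∀ n, 0 < ε n ∧ ε n < 1) (hsum : Summable ε)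
    (μB : Measure (ℕ → Y))
    (hcylB : ∀ (m : ℕ) (C : ℕ → Set Y), (∀ j, MeasurableSet (C j)) →
      (∀ j, m ≤ j → C j = B j) →
      μB {x : ℕ → Y | ∀ j, x j ∈ C j} = ∏ j ∈ Finset.range m, γ (C j) / γ (B j))
    (hsuppB : μB ((⋃ n, tailCylinder B n)ᶜ) = 0)
    (π : Measure (ℕ → Y))
    (hcylπ : ∀ (m : ℕ) (C : ℕ → Set Y), (∀ j, MeasurableSet (C j)) →
      (∀ j, m ≤ j → C j = Set.univ) →
      π {x : ℕ → Y | ∀ j, x j ∈ C j} = ∏ j ∈ Finset.range m,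
        (γ.withDensity fun y =>
          (B j).indicator (fun _ => ENNReal.ofReal (2 * (1 - ε j))) y +
            ((B j)ᶜ).indicator (fun _ => ENNReal.ofReal (2 * ε j)) y) (C j)) :
    μB ≪ π ∧ π ≪ μB :=
  restrictedPower_equiv_infiniteProduct_general γ B hBm hB ε hε hsum μB hcylB hsuppB π hcylπ
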